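/- (Double centralizer theorem, type C₂, long root, in Sp₄.) Let R be a commutative ring and let g ∈ Sp₄(R). Suppose that g commutes with each of the five matrices 1 + E₁₃, 1 + E₂₄, 1 + E₄₂, 1 + (E₁₂ − E₄₃), and 1 + (E₁₄ + E₂₃) (these are exactly the type C₂ root elements at parameter 1 that commute with x_{2e₁}(1) = 1 + E₁₃). Then there exist ω, t ∈ R with ω² = 1 such that g = ω • (1 + t • E₁₃); i.e. g is a central scalar matrix times an element of the long-root subgroup X_{2e₁}. -/

import Mathlib

/-!
Commuting with `1 + X` is the same as commuting with `X`. Commuting with the matrix units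
`E₁₃`, `E₂₄`, `E₄₂` kills every off-diagonal entry of `g` except `g₁₃` and gives `g₁₁ = g₃₃`,
`g₂₂ = g₄₄`, while commuting with `E₁₂ - E₄₃` gives `g₁₁ = g₂₂`. Hence `g = ω • 1 + g₁₃ • E₁₃`
with `ω = g₁₁`; the `(3,1)` entry of `g J gᵀ = J` then reads `ω² = 1`, which lets `ω` be
factored out.
-/

open Matrix

/-- The 4×4 matrix unit over `R`, with rows and columns indexed by `Fin 2 ⊕ Fin 2`
(so that `1,2,3,4` correspond to `inl 0, inl 1, inr 0, inr 1`). -/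
def Esp (R : Type*) [CommRing R] (i j : Fin 2 ⊕ Fin 2) :
    Matrix (Fin 2 ⊕ Fin 2) (Fin 2 ⊕ Fin 2) R :=
  Matrix.single i j 1

theorem Commute.of_one_add_right {A : Type*} [Ring A] {a x : A} (h : Commute a (1 + x)) :
    Commute a x := by
  simpa using h.sub_right (Commute.one_right a)

namespace Matrix

theorem diag_eq_of_commute_single_sub_single {n α : Type*} [Fintype n] [DecidableEq n] [Ring α]
    {i j k l : n} {M : Matrix n n α}
    (hM : Commute (single i j 1 - single k l 1) M) (hki : k ≠ i) (hlj : l ≠ j) :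
    M i i = M j j := by
  have := ext_iff.mpr hM i j
  simp_all [sub_mul, mul_sub, single_mul_apply_of_ne _ _ _ _ _ hki.symm,
    mul_single_apply_of_ne _ _ _ _ _ hlj.symm]

theorem sq_eq_one_of_smul_one_add_single_mem_symplecticGroup {l R : Type*} [Fintype l]
    [DecidableEq l] [CommRing R] (i : l) (ω s : R)
    (h : ω • 1 + single (Sum.inl i) (Sum.inr i) s ∈ symplecticGroup l R) : ω ^ 2 = 1 := by
  have := congr_fun₂ ((SymplecticGroup.mem_iff).mp h) (Sum.inr i) (Sum.inl i)
  simpa [J, mul_apply, Fintype.sum_sum_type, single, one_apply, sq] using this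

end Matrix

theorem eq_smul_one_add_single_of_commute {R : Type*} [CommRing R]
    {g : Matrix (Fin 2 ⊕ Fin 2) (Fin 2 ⊕ Fin 2) R}
    (h13 : Commute (single (.inl 0) (.inr 0) 1) g)
    (h24 : Commute (single (.inl 1) (.inr 1) 1) g)
    (h42 : Commute (single (.inr 1) (.inl 1) 1) g)
    (h12 : Commute (single (.inl 0) (.inl 1) 1 - single (.inr 1) (.inr 0) 1) g) :
    g = g (.inl 0) (.inl 0) • 1 + single (.inl 0) (.inr 0) (g (.inl 0) (.inr 0)) := by
  have h22 := (diag_eq_of_commute_single_sub_single h12 (by simp) (by simp)).symm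
  have h33 := (diag_eq_of_commute_single h13).symm
  have h44 := (diag_eq_of_commute_single h24).symm.trans h22
  ext (k | k) (l | l) <;> fin_cases k <;> fin_cases l <;>
    simp [single, one_apply, h22, h33, h44,
      col_eq_zero_of_commute_single h13, row_eq_zero_of_commute_single h13,
      col_eq_zero_of_commute_single h24, row_eq_zero_of_commute_single h24,
      col_eq_zero_of_commute_single h42, row_eq_zero_of_commute_single h42]

theorem double_centralizer_C2_long_general {R : Type*} [CommRing R]
    (g : Matrix (Fin 2 ⊕ Fin 2) (Fin 2 ⊕ Fin 2) R)
    (hg : g ∈ Matrix.symplecticGroup (Fin 2) R)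
    (h1 : g * (1 + Esp R (.inl 0) (.inr 0)) = (1 + Esp R (.inl 0) (.inr 0)) * g)
    (h2 : g * (1 + Esp R (.inl 1) (.inr 1)) = (1 + Esp R (.inl 1) (.inr 1)) * g)
    (h3 : g * (1 + Esp R (.inr 1) (.inl 1)) = (1 + Esp R (.inr 1) (.inl 1)) * g)
    (h4 : g * (1 + (Esp R (.inl 0) (.inl 1) - Esp R (.inr 1) (.inr 0))) =
      (1 + (Esp R (.inl 0) (.inl 1) - Esp R (.inr 1) (.inr 0))) * g) :
    ∃ ω t : R, ω ^ 2 = 1 ∧ g = ω • (1 + t • Esp R (.inl 0) (.inr 0)) := by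
  have hg_eq := eq_smul_one_add_single_of_commute (Commute.of_one_add_right h1).symm
    (Commute.of_one_add_right h2).symm (Commute.of_one_add_right h3).symm
    (Commute.of_one_add_right h4).symm
  set ω := g (.inl 0) (.inl 0)
  set s := g (.inl 0) (.inr 0)
  have hω : ω ^ 2 = 1 :=
    sq_eq_one_of_smul_one_add_single_mem_symplecticGroup 0 ω s (hg_eq ▸ hg)
  refine ⟨ω, ω * s, hω, ?_⟩
  rw [hg_eq, smul_add, smul_smul, ← mul_assoc, ← sq, hω, one_mul, Esp, smul_single, smul_eq_mul,
    mul_one]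

/-- Double centralizer theorem, type `C₂`, long root, in `Sp₄`: if `g ∈ Sp₄(R)` commutes
with the five type `C₂` root elements at parameter 1 that commute with
`x_{2e₁}(1) = 1 + E₁₃`, namely `1 + E₁₃`, `1 + E₂₄`, `1 + E₄₂`, `1 + (E₁₂ - E₄₃)` and
`1 + (E₁₄ + E₂₃)`, then `g = ω • (1 + t • E₁₃)` for some `ω, t ∈ R` with `ω² = 1`. -/
theorem double_centralizer_C2_long {R : Type*} [CommRing R]
    (g : Matrix (Fin 2 ⊕ Fin 2) (Fin 2 ⊕ Fin 2) R)
    (hg : g ∈ Matrix.symplecticGroup (Fin 2) R)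
    (h1 : g * (1 + Esp R (.inl 0) (.inr 0)) = (1 + Esp R (.inl 0) (.inr 0)) * g)
    (h2 : g * (1 + Esp R (.inl 1) (.inr 1)) = (1 + Esp R (.inl 1) (.inr 1)) * g)
    (h3 : g * (1 + Esp R (.inr 1) (.inl 1)) = (1 + Esp R (.inr 1) (.inl 1)) * g)
    (h4 : g * (1 + (Esp R (.inl 0) (.inl 1) - Esp R (.inr 1) (.inr 0))) =
      (1 + (Esp R (.inl 0) (.inl 1) - Esp R (.inr 1) (.inr 0))) * g)
    (h5 : g * (1 + (Esp R (.inl 0) (.inr 1) + Esp R (.inl 1) (.inr 0))) =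
      (1 + (Esp R (.inl 0) (.inr 1) + Esp R (.inl 1) (.inr 0))) * g) :
    ∃ ω t : R, ω ^ 2 = 1 ∧ g = ω • (1 + t • Esp R (.inl 0) (.inr 0)) :=
  double_centralizer_C2_long_general g hg h1 h2 h3 h4
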